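/- arXiv:math/0701357 — 4 statements merged into one kernel-verified Lean document; each statement's English description precedes it below -/
import Mathlib

section
/- Let A be a prime nontrivial superalgebra over a commutative unital ring φ with 1/2 ∈ φ, let I be a nonzero proper ideal of A, and let U be a graded additive subgroup of A such that [U, I] ⊆ U (superbracket), u∘v ∈ Z for every u, v ∈ U₀, and u∘v = 0 for every u, v ∈ U₁. Assume moreover that [[[U,I],[U,I]], I] = 0. Then: (1) [U,I]₀ ⊆ Z (the even component of [U,I] is central); (2) [U₀, I₀] = 0; and (3) u₁v₁ ∈ Z for all u₁, v₁ ∈ U₁. -/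
open DirectSum

/-- The sign `(−1)^{ij}` for degrees `i j : ZMod 2`. -/
def ssign (i j : ZMod 2) : ℤ := if i = 1 ∧ j = 1 then -1 else 1

variable {φ A : Type*}

section
variable [CommRing φ] [Ring A] [Algebra φ A]

/-- Superbracket `[x,y] = xy − (−1)^{ij} yx` of homogeneous elements of degrees `i`, `j`. -/
def sbr (i j : ZMod 2) (x y : A) : A := x * y - ssign i j • (y * x)

/-- Supercircle product `x∘y = xy + (−1)^{ij} yx` of homogeneous elements of degrees `i`, `j`. -/
def scirc (i j : ZMod 2) (x y : A) : A := x * y + ssign i j • (y * x)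

/-- A graded two-sided ideal of the superalgebra `A = ⨁ 𝒜 i`. -/
structure SuperIdeal (𝒜 : ZMod 2 → Submodule φ A) [GradedAlgebra 𝒜] where
  carrier : Submodule φ A
  mul_mem_left : ∀ (a x : A), x ∈ carrier → a * x ∈ carrier
  mul_mem_right : ∀ (a x : A), x ∈ carrier → x * a ∈ carrier
  graded' : ∀ (i : ZMod 2), ∀ x ∈ carrier, ((DirectSum.decompose 𝒜 x) i : A) ∈ carrier

variable (𝒜 : ZMod 2 → Submodule φ A)

/-- A superalgebra is prime if `I⬝J = 0` forces `I = 0` or `J = 0` for graded ideals `I`, `J`. -/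
def SuperPrime [GradedAlgebra 𝒜] : Prop :=
  ∀ I J : SuperIdeal 𝒜, (∀ x ∈ I.carrier, ∀ y ∈ J.carrier, x * y = 0) →
    I.carrier = ⊥ ∨ J.carrier = ⊥

/-- A superalgebra is semiprime if it has no nonzero graded ideal of square zero. -/
def SuperSemiprime [GradedAlgebra 𝒜] : Prop :=
  ∀ I : SuperIdeal 𝒜, (∀ x ∈ I.carrier, ∀ y ∈ I.carrier, x * y = 0) → I.carrier = ⊥

/-- `Z`, the even part of the center of `A`. -/
def evenCenter : Set A := {z : A | z ∈ 𝒜 0 ∧ ∀ x : A, z * x = x * z}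

/-- A subset `M` of `A` is dense if the (non-unital) subalgebra of `A` generated by `M`
contains a nonzero ideal of `A`. -/
def IsDenseIn [GradedAlgebra 𝒜] (M : Set A) : Prop :=
  ∃ J : SuperIdeal 𝒜, J.carrier ≠ ⊥ ∧
    (J.carrier : Set A) ⊆ NonUnitalAlgebra.adjoin φ M

/-- A superinvolution on the superalgebra `A`. -/
structure Superinvolution (𝒜 : ZMod 2 → Submodule φ A) where
  toFun : A →ₗ[φ] A
  grading : ∀ (i : ZMod 2), ∀ x ∈ 𝒜 i, toFun x ∈ 𝒜 i
  invol : ∀ x : A, toFun (toFun x) = x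
  mul_rev : ∀ (i j : ZMod 2), ∀ x ∈ 𝒜 i, ∀ y ∈ 𝒜 j,
    toFun (x * y) = ssign i j • (toFun y * toFun x)

/-- A Lie ideal of the Lie superalgebra `K` of skew elements of `(A,*)`: a graded
`φ`-submodule of `K` with `[U,K] ⊆ U`. -/
structure LieIdealOfSkew [GradedAlgebra 𝒜] (σ : Superinvolution 𝒜) where
  carrier : Submodule φ A
  skew : ∀ x ∈ carrier, σ.toFun x = -x
  graded' : ∀ (i : ZMod 2), ∀ x ∈ carrier, ((DirectSum.decompose 𝒜 x) i : A) ∈ carrier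
  bracket_mem : ∀ (i j : ZMod 2) (u k : A), u ∈ carrier → u ∈ 𝒜 i →
    k ∈ 𝒜 j → σ.toFun k = -k → sbr i j u k ∈ carrier

/-- The additive span of superbrackets of homogeneous elements of `S` and `T`. -/
def superBrAdd (S T : Set A) : AddSubgroup A :=
  AddSubgroup.closure
    {z : A | ∃ (i j : ZMod 2) (x y : A), x ∈ S ∧ x ∈ 𝒜 i ∧ y ∈ T ∧ y ∈ 𝒜 j ∧ z = sbr i j x y}

/-- The `φ`-submodule spanned by superbrackets of homogeneous elements of `S` and `T`. -/
def superBrSpan (S T : Set A) : Submodule φ A :=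
  Submodule.span φ
    {z : A | ∃ (i j : ZMod 2) (x y : A), x ∈ S ∧ x ∈ 𝒜 i ∧ y ∈ T ∧ y ∈ 𝒜 j ∧ z = sbr i j x y}

end

/-- Data exhibiting the prime superalgebra `A` as a central order in a simple superalgebra `B`
that is 4-dimensional over its center. -/
structure CentralOrderIn4DimSimple (φ : Type*) [CommRing φ] {A : Type*} [Ring A] [Algebra φ A]
    (𝒜 : ZMod 2 → Submodule φ A) [GradedAlgebra 𝒜] where
  B : Type
  [ringB : Ring B]
  [algB : Algebra φ B]
  ℬ : ZMod 2 → Submodule φ B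
  [gradedB : GradedAlgebra ℬ]
  ι : A →ₐ[φ] B
  inj : Function.Injective ι
  grading : ∀ (i : ZMod 2), ∀ x ∈ 𝒜 i, ι x ∈ ℬ i
  central_unit : ∀ z ∈ evenCenter 𝒜, z ≠ 0 → IsUnit (ι z)
  localized : ∀ b : B, ∃ z a : A, z ∈ evenCenter 𝒜 ∧ z ≠ 0 ∧ ι z * b = ι a
  sq_ne_zero : ∃ x y : B, x * y ≠ 0
  simple : ∀ J : SuperIdeal ℬ, J.carrier = ⊥ ∨ J.carrier = ⊤
  dim4 : Module.finrank (Subring.center B) B = 4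

/-!
Put `W = [U, I]`. By the hypothesis every homogeneous element of `[W, W]` supercommutes with `I`,
and in a prime superalgebra an element supercommuting with a nonzero ideal supercommutes with all
of `A`.

(1) For `c ∈ W₀`, `c ∘ c = 2c²` gives `c² ∈ Z`, so `[c, [c, z]] = 2c[c, z]` for `z ∈ I`. That this
element commutes with `c` yields `c²zc = c³z` on `I`, hence `I · c²[c, x] = 0` and `c²[c, x] = 0`
for all `x`. Since `c²` is central, primeness leaves two cases: `c` is central, or `c² = 0`. In
the latter case `czc = -½[c, [c, z]]` is supercentral of square zero, hence `cIc = 0` and `c = 0`.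

(2) If `[a, I₀] ⊆ Z` and `d = [a, z] ≠ 0` for some `z ∈ I₀`, then `d[y, z] = 0` forces `z` to
commute with `I₀`, which in turn gives `dI₀ = 0`, impossible since `I₀ ≠ 0`.

(3) Odd elements of `U` commute with each other, and by (1) `u ∘ z ∈ Z` for odd `z ∈ I`; so for
odd `u, v ∈ U` the product `uv` commutes with `I₀` by (2) and with `I₁` directly, hence is central.
-/

section Superalgebra

variable [CommRing φ] [Ring A] [Algebra φ A]

@[simp] theorem ssign_zero_left (j : ZMod 2) : ssign 0 j = 1 := by simp [ssign]

@[simp] theorem ssign_zero_right (i : ZMod 2) : ssign i 0 = 1 := by simp [ssign]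

@[simp] theorem ssign_one_one : ssign 1 1 = -1 := rfl

theorem ssign_add_right : ∀ i j k : ZMod 2, ssign i (j + k) = ssign i j * ssign i k := by
  decide

theorem sbr_zero_left (j : ZMod 2) (x y : A) : sbr 0 j x y = x * y - y * x := by simp [sbr]

theorem sbr_zero_right (i : ZMod 2) (x y : A) : sbr i 0 x y = x * y - y * x := by simp [sbr]

theorem sbr_one_one (x y : A) : sbr 1 1 x y = x * y + y * x := by simp [sbr]

theorem scirc_zero_zero (x y : A) : scirc 0 0 x y = x * y + y * x := by simp [scirc]

theorem scirc_one_one (x y : A) : scirc 1 1 x y = x * y - y * x := by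
  simp [scirc, sub_eq_add_neg]

theorem sbr_mul_right (τ ξ υ : ZMod 2) (t x y : A) :
    sbr τ (ξ + υ) t (x * y) = sbr τ ξ t x * y + ssign τ ξ • (x * sbr τ υ t y) := by
  simp only [sbr, ssign_add_right, mul_smul, mul_sub, sub_mul, smul_sub, mul_smul_comm,
    smul_mul_assoc, mul_assoc]
  abel

theorem eq_of_add_self_eq_add_self (φ : Type*) [CommRing φ] [Invertible (2 : φ)] {M : Type*}
    [AddCommGroup M] [Module φ M] {x y : M} (h : x + x = y + y) : x = y := by
  rw [← invOf_two_smul_add_invOf_two_smul φ x, ← smul_add, h, smul_add,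
    invOf_two_smul_add_invOf_two_smul]

variable (𝒜 : ZMod 2 → Submodule φ A)

theorem sbr_mem_superBrAdd {S T : Set A} {i j : ZMod 2} {x y : A} (hx : x ∈ S) (hxi : x ∈ 𝒜 i)
    (hy : y ∈ T) (hyj : y ∈ 𝒜 j) : sbr i j x y ∈ superBrAdd 𝒜 S T :=
  AddSubgroup.subset_closure ⟨i, j, x, y, hx, hxi, hy, hyj, rfl⟩

theorem superBrAdd_le {S T : Set A} {H : AddSubgroup A}
    (h : ∀ i j x y, x ∈ S → x ∈ 𝒜 i → y ∈ T → y ∈ 𝒜 j → sbr i j x y ∈ H) :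
    superBrAdd 𝒜 S T ≤ H :=
  (AddSubgroup.closure_le H).2 fun _ ⟨i, j, x, y, hx, hxi, hy, hyj, hz⟩ =>
    hz ▸ h i j x y hx hxi hy hyj

theorem add_mem_evenCenter {x y : A} (hx : x ∈ evenCenter 𝒜) (hy : y ∈ evenCenter 𝒜) :
    x + y ∈ evenCenter 𝒜 :=
  ⟨add_mem hx.1 hy.1, fun z => by rw [add_mul, mul_add, hx.2, hy.2]⟩

theorem mem_evenCenter_of_add_self [Invertible (2 : φ)] {x : A} (h : x + x ∈ evenCenter 𝒜) :
    x ∈ evenCenter 𝒜 := by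
  refine ⟨?_, fun z => eq_of_add_self_eq_add_self φ ?_⟩
  · rw [← invOf_two_smul_add_invOf_two_smul φ x, ← smul_add]
    exact Submodule.smul_mem _ _ h.1
  · rw [← add_mul, h.2, mul_add]

def SupercommutesWith (S : Set A) (τ : ZMod 2) (t : A) : Prop :=
  ∀ ξ : ZMod 2, ∀ x ∈ S, x ∈ 𝒜 ξ → sbr τ ξ t x = 0

theorem SupercommutesWith.smul {S : Set A} {τ : ZMod 2} {t : A}
    (h : SupercommutesWith 𝒜 S τ t) (r : φ) : SupercommutesWith 𝒜 S τ (r • t) := by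
  intro ξ x hx hxξ
  have := h ξ x hx hxξ
  simp only [sbr, smul_mul_assoc, mul_smul_comm] at this ⊢
  rw [smul_comm (ssign τ ξ) r, ← smul_sub, this, smul_zero]

variable {𝒜} in
theorem mul_eq_mul_of_scirc_eq_zero {U : AddSubgroup A}
    (hU1 : ∀ u v : A, u ∈ U → u ∈ 𝒜 1 → v ∈ U → v ∈ 𝒜 1 → scirc 1 1 u v = 0)
    {u v : A} (hu : u ∈ U) (hu1 : u ∈ 𝒜 1) (hv : v ∈ U) (hv1 : v ∈ 𝒜 1) : u * v = v * u :=
  sub_eq_zero.1 (scirc_one_one u v ▸ hU1 u v hu hu1 hv hv1)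

variable [GradedAlgebra 𝒜]

theorem mul_mem_graded_of_add_eq {i j k : ZMod 2} (h : i + j = k) {x y : A} (hx : x ∈ 𝒜 i)
    (hy : y ∈ 𝒜 j) : x * y ∈ 𝒜 k :=
  h ▸ SetLike.mul_mem_graded hx hy

theorem sbr_mem_graded {i j : ZMod 2} {x y : A} (hx : x ∈ 𝒜 i) (hy : y ∈ 𝒜 j) :
    sbr i j x y ∈ 𝒜 (i + j) :=
  sub_mem (SetLike.mul_mem_graded hx hy)
    (zsmul_mem (mul_mem_graded_of_add_eq 𝒜 (add_comm j i) hy hx) _)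

theorem decompose_zero_add_decompose_one (x : A) :
    (decompose 𝒜 x 0 : A) + decompose 𝒜 x 1 = x := by
  classical
  have h := Finset.sum_subset (Finset.subset_univ (DFinsupp.support (decompose 𝒜 x)))
    (f := fun i => (decompose 𝒜 x i : A)) (fun i _ hi => by simp_all)
  rw [sum_support_decompose] at h
  exact (Fin.sum_univ_two _).symm.trans h.symm

theorem forall_of_forall_homogeneous {p : A → Prop} (hadd : ∀ x y, p x → p y → p (x + y))
    (h : ∀ i, ∀ x ∈ 𝒜 i, p x) (x : A) : p x := by
  rw [← decompose_zero_add_decompose_one 𝒜 x]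
  exact hadd _ _ (h 0 _ (SetLike.coe_mem _)) (h 1 _ (SetLike.coe_mem _))

theorem decompose_mem_of_mem_graded {S : Submodule φ A} {m : A} {d : ZMod 2} (hm : m ∈ 𝒜 d)
    (hS : m ∈ S) (k : ZMod 2) : (decompose 𝒜 m k : A) ∈ S := by
  by_cases h : d = k
  · subst h
    rwa [decompose_of_mem_same 𝒜 hm]
  · rw [decompose_of_mem_ne 𝒜 hm h]
    exact zero_mem _

namespace SuperIdeal

variable {𝒜} (I : SuperIdeal 𝒜)

theorem forall_mem_of_homogeneous {p : A → Prop} (hadd : ∀ x y, p x → p y → p (x + y))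
    (h : ∀ i, ∀ y ∈ I.carrier, y ∈ 𝒜 i → p y) : ∀ y ∈ I.carrier, p y := fun y hy => by
  rw [← decompose_zero_add_decompose_one 𝒜 y]
  exact hadd _ _ (h 0 _ (I.graded' 0 y hy) (SetLike.coe_mem _))
    (h 1 _ (I.graded' 1 y hy) (SetLike.coe_mem _))

theorem exists_homogeneous_ne_zero (hI : I.carrier ≠ ⊥) :
    ∃ i y, y ∈ I.carrier ∧ y ∈ 𝒜 i ∧ y ≠ 0 := by
  by_contra! h
  exact hI ((Submodule.eq_bot_iff _).2
    (I.forall_mem_of_homogeneous (fun x y hx hy => by rw [hx, hy, add_zero]) h))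

variable (𝒜) in
def spanSingleton (a : A) {i : ZMod 2} (ha : a ∈ 𝒜 i) : SuperIdeal 𝒜 where
  carrier := Submodule.span φ {z | ∃ x y : A, z = x * a * y}
  mul_mem_left b _ hx := by
    refine (Submodule.span_le (p := (Submodule.span φ _).comap (LinearMap.mulLeft φ b))).2 ?_ hx
    rintro _ ⟨x, y, rfl⟩
    exact Submodule.subset_span ⟨b * x, y, by simp [mul_assoc]⟩
  mul_mem_right b _ hx := by
    refine (Submodule.span_le (p := (Submodule.span φ _).comap (LinearMap.mulRight φ b))).2 ?_ hx
    rintro _ ⟨x, y, rfl⟩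
    exact Submodule.subset_span ⟨x, y * b, by simp [mul_assoc]⟩
  graded' k _ hx := by
    set S := Submodule.span φ {z | ∃ x y : A, z = x * a * y}
    have key : ∀ x y : A, x * a * y ∈ S.comap (GradedAlgebra.proj 𝒜 k) := by
      refine forall_of_forall_homogeneous 𝒜
        (fun x x' hx hx' y => by simpa only [add_mul] using add_mem (hx y) (hx' y))
        fun p x hx => forall_of_forall_homogeneous 𝒜
          (fun y y' hy hy' => by simpa only [mul_add] using add_mem hy hy') fun q y hy => ?_
      rw [Submodule.mem_comap, GradedAlgebra.proj_apply]
      exact decompose_mem_of_mem_graded 𝒜 (S := S)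
        (SetLike.mul_mem_graded (SetLike.mul_mem_graded hx ha) hy)
        (Submodule.subset_span ⟨x, y, rfl⟩) k
    have hle : S ≤ S.comap (GradedAlgebra.proj 𝒜 k) := by
      refine Submodule.span_le.2 ?_
      rintro _ ⟨x, y, rfl⟩
      exact key x y
    simpa only [Submodule.mem_comap, GradedAlgebra.proj_apply] using hle hx

theorem mem_spanSingleton_self (a : A) {i : ZMod 2} (ha : a ∈ 𝒜 i) :
    a ∈ (spanSingleton 𝒜 a ha).carrier :=
  Submodule.subset_span ⟨1, 1, by simp⟩

end SuperIdeal

end Superalgebra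

section Identities

variable [Ring A]

theorem sq_mul_mul_eq_cube_mul (φ : Type*) [CommRing φ] [Invertible (2 : φ)] [Algebra φ A]
    {c z : A} (hz : c * c * z = z * (c * c))
    (h : (c * (c * z - z * c) - (c * z - z * c) * c) * c =
      c * (c * (c * z - z * c) - (c * z - z * c) * c)) :
    c * c * z * c = c * c * c * z := by
  set d := c * c * z * c - c * c * c * z with hd
  have h4 : (d + d) + (d + d) = 0 := by
    calc (d + d) + (d + d)
        = (c * (c * z - z * c) - (c * z - z * c) * c) * c -
            c * (c * (c * z - z * c) - (c * z - z * c) * c) -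
            (z * (c * c) - c * c * z) * c + (3 : ℤ) • (c * (z * (c * c) - c * c * z)) := by
          rw [hd]; noncomm_ring
      _ = 0 := by rw [h, hz]; simp
  have h2 : d + d = 0 := eq_of_add_self_eq_add_self φ (by rw [h4, add_zero])
  exact sub_eq_zero.1 (eq_of_add_self_eq_add_self φ (by rw [h2, add_zero]))

theorem mul_commute_of_anticommutators (φ : Type*) [CommRing φ] [Invertible (2 : φ)]
    [Algebra φ A] {u v z : A} (huv : u * v = v * u)
    (hu : (u * z + z * u) * v = v * (u * z + z * u))
    (hv : (v * z + z * v) * u = u * (v * z + z * v)) : u * v * z = z * (u * v) := by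
  have h1 : u * v * z - z * (u * v) = u * (v * z + z * v) - (u * z + z * u) * v := by
    noncomm_ring
  have h2 : u * v * z - z * (u * v) = (u * z + z * u) * v - u * (v * z + z * v) := by
    calc u * v * z - z * (u * v) = v * u * z - z * (v * u) := by rw [huv]
      _ = v * (u * z + z * u) - (v * z + z * v) * u := by noncomm_ring
      _ = (u * z + z * u) * v - u * (v * z + z * v) := by rw [hu, hv]
  refine sub_eq_zero.1 (eq_of_add_self_eq_add_self φ ?_)
  nth_rewrite 1 [h1]
  rw [h2]
  abel

end Identities

section OddPart

variable [CommRing φ] [Ring A] [Algebra φ A] {𝒜 : ZMod 2 → Submodule φ A} [GradedAlgebra 𝒜]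
  {I : SuperIdeal 𝒜} {U : AddSubgroup A}

theorem anticommutator_mem_evenCenter
    (hUIZ : ∀ x ∈ superBrAdd 𝒜 U I.carrier, x ∈ 𝒜 0 → x ∈ evenCenter 𝒜)
    {u z : A} (hu : u ∈ U) (hu1 : u ∈ 𝒜 1) (hz : z ∈ I.carrier) (hz1 : z ∈ 𝒜 1) :
    u * z + z * u ∈ evenCenter 𝒜 :=
  sbr_one_one u z ▸ hUIZ _ (sbr_mem_superBrAdd 𝒜 hu hu1 hz hz1) (sbr_mem_graded 𝒜 hu1 hz1)

theorem mul_mem_evenCenter_of_mem_ideal [Invertible (2 : φ)]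
    (hU1 : ∀ u v : A, u ∈ U → u ∈ 𝒜 1 → v ∈ U → v ∈ 𝒜 1 → scirc 1 1 u v = 0)
    (hUIZ : ∀ x ∈ superBrAdd 𝒜 U I.carrier, x ∈ 𝒜 0 → x ∈ evenCenter 𝒜)
    {u w : A} (hu : u ∈ U) (hu1 : u ∈ 𝒜 1) (hwU : w ∈ U) (hwI : w ∈ I.carrier) (hw1 : w ∈ 𝒜 1) :
    u * w ∈ evenCenter 𝒜 :=
  mem_evenCenter_of_add_self 𝒜 (by
    simpa only [mul_eq_mul_of_scirc_eq_zero hU1 hwU hw1 hu hu1]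
      using anticommutator_mem_evenCenter hUIZ hu hu1 hwI hw1)

end OddPart

namespace SuperPrime

variable [CommRing φ] [Ring A] [Algebra φ A] {𝒜 : ZMod 2 → Submodule φ A} [GradedAlgebra 𝒜]
  {I : SuperIdeal 𝒜}

theorem eq_zero_or_eq_zero_of_mul_mul (hprime : SuperPrime 𝒜) {a b : A} {i j : ZMod 2}
    (ha : a ∈ 𝒜 i) (hb : b ∈ 𝒜 j) (h : ∀ x, a * x * b = 0) : a = 0 ∨ b = 0 := by
  have hspan : Submodule.span φ {z | ∃ x y : A, z = x * a * y} *
      Submodule.span φ {z | ∃ x y : A, z = x * b * y} = ⊥ := by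
    rw [Submodule.span_mul_span, Submodule.span_eq_bot]
    rintro _ ⟨_, ⟨x, y, rfl⟩, _, ⟨x', y', rfl⟩, rfl⟩
    calc x * a * y * (x' * b * y') = x * (a * (y * x') * b) * y' := by simp only [mul_assoc]
      _ = 0 := by rw [h, mul_zero, zero_mul]
  refine (hprime (.spanSingleton 𝒜 a ha) (.spanSingleton 𝒜 b hb) fun m hm n hn => ?_).imp
    (fun h => ?_) (fun h => ?_)
  · simpa [hspan] using (Submodule.mul_mem_mul hm hn :
      m * n ∈ Submodule.span φ _ * Submodule.span φ _)
  · simpa [h] using SuperIdeal.mem_spanSingleton_self a ha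
  · simpa [h] using SuperIdeal.mem_spanSingleton_self b hb

theorem eq_zero_of_mul_ideal (hprime : SuperPrime 𝒜) (hI : I.carrier ≠ ⊥) {a : A} {i : ZMod 2}
    (ha : a ∈ 𝒜 i) (h : ∀ y ∈ I.carrier, a * y = 0) : a = 0 := by
  obtain ⟨j, y, hy, hyj, hy0⟩ := I.exists_homogeneous_ne_zero hI
  refine (hprime.eq_zero_or_eq_zero_of_mul_mul ha hyj fun x => ?_).resolve_right hy0
  rw [mul_assoc]
  exact h _ (I.mul_mem_left x y hy)

theorem eq_zero_of_ideal_mul (hprime : SuperPrime 𝒜) (hI : I.carrier ≠ ⊥) {a : A} {i : ZMod 2}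
    (ha : a ∈ 𝒜 i) (h : ∀ y ∈ I.carrier, y * a = 0) : a = 0 := by
  obtain ⟨j, y, hy, hyj, hy0⟩ := I.exists_homogeneous_ne_zero hI
  exact (hprime.eq_zero_or_eq_zero_of_mul_mul hyj ha fun x =>
    h _ (I.mul_mem_right x y hy)).resolve_left hy0

theorem eq_zero_or_eq_zero_of_central_mul (hprime : SuperPrime 𝒜) {c g : A}
    (hc : c ∈ evenCenter 𝒜) {j : ZMod 2} (hg : g ∈ 𝒜 j) (h : c * g = 0) : c = 0 ∨ g = 0 :=
  hprime.eq_zero_or_eq_zero_of_mul_mul hc.1 hg fun x => by rw [hc.2 x, mul_assoc, h, mul_zero]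

theorem exists_even_ne_zero (hprime : SuperPrime 𝒜) (hI : I.carrier ≠ ⊥) :
    ∃ y ∈ I.carrier, y ∈ 𝒜 0 ∧ y ≠ 0 := by
  by_contra! h
  have hodd : ∀ z ∈ I.carrier, z ∈ 𝒜 1 := fun z hz => by
    rw [← decompose_zero_add_decompose_one 𝒜 z, h _ (I.graded' 0 z hz) (SetLike.coe_mem _),
      zero_add]
    exact SetLike.coe_mem _
  refine (hprime I I fun x hx y hy => h _ (I.mul_mem_left x y hy) ?_).elim hI hI
  exact mul_mem_graded_of_add_eq 𝒜 (by decide) (hodd x hx) (hodd y hy)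

theorem supercommutesWith_univ_of_ideal (hprime : SuperPrime 𝒜) (hI : I.carrier ≠ ⊥) {t : A}
    {τ : ZMod 2} (ht : t ∈ 𝒜 τ) (h : SupercommutesWith 𝒜 I.carrier τ t) :
    SupercommutesWith 𝒜 Set.univ τ t := by
  intro ξ x _ hx
  refine hprime.eq_zero_of_mul_ideal hI (sbr_mem_graded 𝒜 ht hx)
    (I.forall_mem_of_homogeneous (fun y y' hy hy' => by rw [mul_add, hy, hy', add_zero])
      fun υ y hy hyυ => ?_)
  have := sbr_mul_right τ ξ υ t x y
  rw [h _ _ (I.mul_mem_left x y hy) (SetLike.mul_mem_graded hx hyυ), h υ y hy hyυ, mul_zero,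
    smul_zero, add_zero] at this
  exact this.symm

theorem mem_evenCenter_of_supercommutesWith (hprime : SuperPrime 𝒜) (hI : I.carrier ≠ ⊥) {t : A}
    (ht : t ∈ 𝒜 0) (h : SupercommutesWith 𝒜 I.carrier 0 t) : t ∈ evenCenter 𝒜 := by
  have hA := hprime.supercommutesWith_univ_of_ideal hI ht h
  refine ⟨ht, forall_of_forall_homogeneous 𝒜 (fun x y hx hy => by rw [mul_add, hx, hy, add_mul])
    fun ξ x hx => ?_⟩
  simpa [sbr_zero_left, sub_eq_zero] using hA ξ x trivial hx

theorem eq_zero_of_mul_self_eq_zero (hprime : SuperPrime 𝒜) {t : A} {τ : ZMod 2} (ht : t ∈ 𝒜 τ)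
    (hc : SupercommutesWith 𝒜 Set.univ τ t) (h : t * t = 0) : t = 0 := by
  refine (hprime.eq_zero_or_eq_zero_of_mul_mul ht ht (forall_of_forall_homogeneous 𝒜
    (fun x y hx hy => by rw [mul_add, add_mul, hx, hy, add_zero]) fun ξ x hx => ?_)).elim id id
  have := hc ξ x trivial hx
  rw [sbr, sub_eq_zero] at this
  rw [this, smul_mul_assoc, mul_assoc, h, mul_zero, smul_zero]

theorem eq_zero_of_mul_ideal_mul (hprime : SuperPrime 𝒜) (hI : I.carrier ≠ ⊥) {c : A}
    {i : ZMod 2} (hc : c ∈ 𝒜 i) (h : ∀ z ∈ I.carrier, c * z * c = 0) : c = 0 := by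
  by_contra hc0
  refine hc0 (hprime.eq_zero_of_mul_ideal hI hc (I.forall_mem_of_homogeneous
    (fun x y hx hy => by rw [mul_add, hx, hy, add_zero]) fun j z hz hzj => ?_))
  refine (hprime.eq_zero_or_eq_zero_of_mul_mul (SetLike.mul_mem_graded hc hzj) hc
    fun x => ?_).resolve_right hc0
  rw [mul_assoc c z x]
  exact h _ (I.mul_mem_right x z hz)

theorem commute_of_commutator_mem_evenCenter (hprime : SuperPrime 𝒜) (hI : I.carrier ≠ ⊥)
    {a : A} (ha : a ∈ 𝒜 0) (hZ : ∀ y ∈ I.carrier, y ∈ 𝒜 0 → a * y - y * a ∈ evenCenter 𝒜)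
    {z : A} (hz : z ∈ I.carrier) (hz0 : z ∈ 𝒜 0) : a * z = z * a := by
  have hd := hZ z hz hz0
  by_contra hne
  replace hne : a * z - z * a ≠ 0 := sub_ne_zero.2 hne
  have hcomm : ∀ y ∈ I.carrier, y ∈ 𝒜 0 → y * z = z * y := fun y hy hy0 => by
    have hay := hZ y hy hy0
    have hayz := hZ (y * z) (I.mul_mem_right z y hy)
      (mul_mem_graded_of_add_eq 𝒜 (add_zero 0) hy0 hz0)
    have hyz : (a * z - z * a) * (y * z - z * y) = 0 := by
      have e : (a * z - z * a) * (y * z - z * y) =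
          ((a * (y * z) - y * z * a) * z - z * (a * (y * z) - y * z * a)) +
          (z * (a * y - y * a) - (a * y - y * a) * z) * z -
          y * ((a * z - z * a) * z - z * (a * z - z * a)) +
          ((a * z - z * a) * (y * z - z * y) - (y * z - z * y) * (a * z - z * a)) := by
        noncomm_ring
      rw [e, hayz.2 z, hay.2 z, hd.2 z, hd.2 (y * z - z * y)]
      simp
    have hyz0 : y * z - z * y ∈ 𝒜 0 := by simpa [sbr_zero_left] using sbr_mem_graded 𝒜 hy0 hz0
    exact sub_eq_zero.1 ((hprime.eq_zero_or_eq_zero_of_central_mul hd hyz0 hyz).resolve_left hne)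
  obtain ⟨y, hy, hy0, hyne⟩ := hprime.exists_even_ne_zero hI
  refine hyne ((hprime.eq_zero_or_eq_zero_of_central_mul hd hy0 ?_).resolve_left hne)
  have hay := I.mul_mem_left a y hy
  calc (a * z - z * a) * y = a * (z * y - y * z) + (a * y * z - z * (a * y)) := by noncomm_ring
    _ = 0 := by
      rw [hcomm y hy hy0, hcomm _ hay (mul_mem_graded_of_add_eq 𝒜 (add_zero 0) ha hy0)]
      simp

theorem eq_zero_of_mul_self_eq_zero_of_sbr_sbr [Invertible (2 : φ)] (hprime : SuperPrime 𝒜)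
    (hI : I.carrier ≠ ⊥) {c : A} (hc : c ∈ 𝒜 0) (hcc : c * c = 0)
    (hT : ∀ j, ∀ z ∈ I.carrier, z ∈ 𝒜 j →
      SupercommutesWith 𝒜 Set.univ j (sbr 0 j c (sbr 0 j c z))) :
    c = 0 := by
  refine hprime.eq_zero_of_mul_ideal_mul hI hc (I.forall_mem_of_homogeneous
    (fun x y hx hy => by rw [mul_add, add_mul, hx, hy, add_zero]) fun j z hz hzj => ?_)
  have hTz : sbr 0 j c (sbr 0 j c z) = -(c * z * c + c * z * c) := by
    rw [sbr_zero_left, sbr_zero_left]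
    calc c * (c * z - z * c) - (c * z - z * c) * c
        = c * c * z + z * (c * c) - (c * z * c + c * z * c) := by noncomm_ring
      _ = -(c * z * c + c * z * c) := by rw [hcc]; simp
  have hczc : c * z * c = (-⅟2 : φ) • sbr 0 j c (sbr 0 j c z) := by
    rw [hTz, smul_neg, neg_smul, neg_neg, smul_add, invOf_two_smul_add_invOf_two_smul]
  have hczc_mem : c * z * c ∈ 𝒜 j :=
    mul_mem_graded_of_add_eq 𝒜 (add_zero j) (mul_mem_graded_of_add_eq 𝒜 (zero_add j) hc hzj) hc
  refine hprime.eq_zero_of_mul_self_eq_zero hczc_mem (hczc ▸ (hT j z hz hzj).smul 𝒜 _) ?_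
  calc c * z * c * (c * z * c) = c * z * (c * c) * (z * c) := by noncomm_ring
    _ = 0 := by rw [hcc]; simp

theorem mem_evenCenter_of_mul_self_mem_of_sbr_sbr [Invertible (2 : φ)] (hprime : SuperPrime 𝒜)
    (hI : I.carrier ≠ ⊥) {c : A} (hc : c ∈ 𝒜 0) (hcc : c * c ∈ evenCenter 𝒜)
    (hT : ∀ j, ∀ z ∈ I.carrier, z ∈ 𝒜 j →
      SupercommutesWith 𝒜 Set.univ j (sbr 0 j c (sbr 0 j c z))) :
    c ∈ evenCenter 𝒜 := by
  by_cases hcc0 : c * c = 0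
  · rw [hprime.eq_zero_of_mul_self_eq_zero_of_sbr_sbr hI hc hcc0 hT]
    exact ⟨zero_mem _, by simp⟩
  have hcube : ∀ z ∈ I.carrier, c * c * z * c = c * c * c * z :=
    I.forall_mem_of_homogeneous (fun x y hx hy => by
      rw [mul_add, add_mul, hx, hy, mul_add]) fun j z hz hzj => by
      have := hT j z hz hzj 0 c trivial hc
      rw [sbr_zero_right, sbr_zero_left, sbr_zero_left, sub_eq_zero] at this
      exact sq_mul_mul_eq_cube_mul φ (hcc.2 z) this
  refine ⟨hc, forall_of_forall_homogeneous 𝒜 (fun x y hx hy => by rw [mul_add, hx, hy, add_mul])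
    fun ξ x hx => ?_⟩
  have hcx : c * x - x * c ∈ 𝒜 ξ := by simpa [sbr_zero_left] using sbr_mem_graded 𝒜 hc hx
  have hann : c * c * (c * x - x * c) = 0 := by
    refine hprime.eq_zero_of_ideal_mul hI (mul_mem_graded_of_add_eq 𝒜 (zero_add ξ) hcc.1 hcx)
      fun z hz => ?_
    calc z * (c * c * (c * x - x * c)) = z * (c * c) * (c * x - x * c) := by noncomm_ring
      _ = c * c * z * c * x - c * c * (z * x) * c := by rw [← hcc.2 z]; noncomm_ring
      _ = 0 := by rw [hcube z hz, hcube _ (I.mul_mem_right x z hz)]; noncomm_ring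
  exact sub_eq_zero.1 ((hprime.eq_zero_or_eq_zero_of_central_mul hcc hcx hann).resolve_left hcc0)

theorem mem_evenCenter_of_mem_superBrAdd [Invertible (2 : φ)] (hprime : SuperPrime 𝒜)
    (hI : I.carrier ≠ ⊥) (W : AddSubgroup A)
    (hWI : ∀ i j, ∀ w ∈ W, w ∈ 𝒜 i → ∀ z ∈ I.carrier, z ∈ 𝒜 j → sbr i j w z ∈ W)
    (hsq : ∀ w ∈ W, w ∈ 𝒜 0 → w * w ∈ evenCenter 𝒜)
    (hWW : superBrAdd 𝒜 (superBrAdd 𝒜 W W : Set A) I.carrier = ⊥)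
    {c : A} (hc : c ∈ W) (hc0 : c ∈ 𝒜 0) : c ∈ evenCenter 𝒜 := by
  refine hprime.mem_evenCenter_of_mul_self_mem_of_sbr_sbr hI hc0 (hsq c hc hc0)
    fun j z hz hzj => ?_
  have hcz := sbr_mem_graded 𝒜 hc0 hzj
  have hT := sbr_mem_superBrAdd 𝒜 hc hc0 (hWI 0 j c hc hc0 z hz hzj) hcz
  have hTj : sbr 0 j c (sbr 0 j c z) ∈ 𝒜 j := by simpa using sbr_mem_graded 𝒜 hc0 hcz
  refine hprime.supercommutesWith_univ_of_ideal hI hTj fun ξ y hy hyξ => ?_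
  rw [← AddSubgroup.mem_bot, ← hWW]
  exact sbr_mem_superBrAdd 𝒜 hT hTj hy hyξ

theorem mul_mem_evenCenter_of_odd [Invertible (2 : φ)] (hprime : SuperPrime 𝒜)
    (hI : I.carrier ≠ ⊥) (U : AddSubgroup A)
    (hUI : ∀ (i j : ZMod 2), ∀ u ∈ U, u ∈ 𝒜 i → ∀ y ∈ I.carrier, y ∈ 𝒜 j → sbr i j u y ∈ U)
    (hU1 : ∀ u v : A, u ∈ U → u ∈ 𝒜 1 → v ∈ U → v ∈ 𝒜 1 → scirc 1 1 u v = 0)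
    (hUIZ : ∀ x ∈ superBrAdd 𝒜 U I.carrier, x ∈ 𝒜 0 → x ∈ evenCenter 𝒜)
    {u v : A} (hu : u ∈ U) (hu1 : u ∈ 𝒜 1) (hv : v ∈ U) (hv1 : v ∈ 𝒜 1) :
    u * v ∈ evenCenter 𝒜 := by
  have huv : u * v ∈ 𝒜 0 := mul_mem_graded_of_add_eq 𝒜 rfl hu1 hv1
  have hbr : ∀ u ∈ U, u ∈ 𝒜 1 → ∀ y ∈ I.carrier, y ∈ 𝒜 0 →
      u * y - y * u ∈ U ∧ u * y - y * u ∈ I.carrier ∧ u * y - y * u ∈ 𝒜 1 :=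
    fun u hu hu1 y hy hy0 => ⟨sbr_zero_right 1 u y ▸ hUI 1 0 u hu hu1 y hy hy0,
      sub_mem (I.mul_mem_left u y hy) (I.mul_mem_right u y hy),
      by simpa [sbr_zero_right] using sbr_mem_graded 𝒜 hu1 hy0⟩
  have heven : ∀ z ∈ I.carrier, z ∈ 𝒜 0 → u * v * z = z * (u * v) := fun z hz hz0 => by
    refine hprime.commute_of_commutator_mem_evenCenter hI huv (fun y hy hy0 => ?_) hz hz0
    obtain ⟨hvU, hvI, hv1'⟩ := hbr v hv hv1 y hy hy0
    obtain ⟨huU, huI, hu1'⟩ := hbr u hu hu1 y hy hy0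
    have e : u * v * y - y * (u * v) = u * (v * y - y * v) + (u * y - y * u) * v := by
      noncomm_ring
    rw [e, mul_eq_mul_of_scirc_eq_zero hU1 huU hu1' hv hv1]
    exact add_mem_evenCenter 𝒜 (mul_mem_evenCenter_of_mem_ideal hU1 hUIZ hu hu1 hvU hvI hv1')
      (mul_mem_evenCenter_of_mem_ideal hU1 hUIZ hv hv1 huU huI hu1')
  have hodd : ∀ z ∈ I.carrier, z ∈ 𝒜 1 → u * v * z = z * (u * v) := fun z hz hz1 =>
    mul_commute_of_anticommutators φ (mul_eq_mul_of_scirc_eq_zero hU1 hu hu1 hv hv1)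
      ((anticommutator_mem_evenCenter hUIZ hu hu1 hz hz1).2 v)
      ((anticommutator_mem_evenCenter hUIZ hv hv1 hz hz1).2 u)
  refine hprime.mem_evenCenter_of_supercommutesWith hI huv fun ξ z hz hzξ => ?_
  rw [sbr_zero_left, sub_eq_zero]
  rcases (by decide : ∀ j : ZMod 2, j = 0 ∨ j = 1) ξ with rfl | rfl
  exacts [heven z hz hzξ, hodd z hz hzξ]

end SuperPrime

theorem steps_one_two_three_general
    {φ A : Type*} [CommRing φ] [Invertible (2 : φ)] [Ring A] [Algebra φ A]
    (𝒜 : ZMod 2 → Submodule φ A) [GradedAlgebra 𝒜]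
    (hprime : SuperPrime 𝒜)
    (I : SuperIdeal 𝒜) (hIne : I.carrier ≠ ⊥)
    (U : AddSubgroup A)
    (hUI : ∀ (i j : ZMod 2), ∀ u ∈ U, u ∈ 𝒜 i → ∀ y ∈ I.carrier, y ∈ 𝒜 j →
      sbr i j u y ∈ U)
    (hU0 : ∀ u v : A, u ∈ U → u ∈ 𝒜 0 → v ∈ U → v ∈ 𝒜 0 → scirc 0 0 u v ∈ evenCenter 𝒜)
    (hU1 : ∀ u v : A, u ∈ U → u ∈ 𝒜 1 → v ∈ U → v ∈ 𝒜 1 → scirc 1 1 u v = 0)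
    (hyp : superBrAdd 𝒜
        (↑(superBrAdd 𝒜 (↑(superBrAdd 𝒜 (↑U) (↑I.carrier)))
            (↑(superBrAdd 𝒜 (↑U) (↑I.carrier)))) : Set A)
        (↑I.carrier) = ⊥) :
    (∀ x ∈ superBrAdd 𝒜 (↑U) (↑I.carrier), x ∈ 𝒜 0 → x ∈ evenCenter 𝒜) ∧
    (∀ u ∈ U, u ∈ 𝒜 0 → ∀ y ∈ I.carrier, y ∈ 𝒜 0 → u * y = y * u) ∧
    (∀ u v : A, u ∈ U → u ∈ 𝒜 1 → v ∈ U → v ∈ 𝒜 1 → u * v ∈ evenCenter 𝒜) := by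
  have hWU : superBrAdd 𝒜 U I.carrier ≤ U :=
    superBrAdd_le 𝒜 fun i j u y hu hui hy hyj => hUI i j u hu hui y hy hyj
  have hWcentral : ∀ x ∈ superBrAdd 𝒜 U I.carrier, x ∈ 𝒜 0 → x ∈ evenCenter 𝒜 :=
    fun x hx hx0 => hprime.mem_evenCenter_of_mem_superBrAdd hIne _
      (fun i j w hw hwi z hz hzj => sbr_mem_superBrAdd 𝒜 (hWU hw) hwi hz hzj)
      (fun w hw hw0 => mem_evenCenter_of_add_self 𝒜
        (scirc_zero_zero w w ▸ hU0 w w (hWU hw) hw0 (hWU hw) hw0))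
      hyp hx hx0
  refine ⟨hWcentral, fun u hu hu0 y hy hy0 => ?_, fun u v hu hu1 hv hv1 =>
    hprime.mul_mem_evenCenter_of_odd hIne U hUI hU1 hWcentral hu hu1 hv hv1⟩
  refine hprime.commute_of_commutator_mem_evenCenter hIne hu0 (fun y' hy' hy'0 => ?_) hy hy0
  exact sbr_zero_left 0 u y' ▸
    hWcentral _ (sbr_mem_superBrAdd 𝒜 hu hu0 hy' hy'0) (sbr_mem_graded 𝒜 hu0 hy'0)

/-- **(Steps 1–3 of case (a) in Theorem 2.4.)** Let `A` be a prime nontrivial superalgebra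
over a commutative ring `φ` with `½ ∈ φ`, `I` a nonzero proper ideal, and `U` a graded
additive subgroup with `[U, I] ⊆ U`, `u∘v ∈ Z` for `u, v ∈ U₀` and `u∘v = 0` for
`u, v ∈ U₁`. If `[[[U,I],[U,I]], I] = 0`, then `[U,I]₀ ⊆ Z`, `[U₀, I₀] = 0`, and
`u₁v₁ ∈ Z` for all `u₁, v₁ ∈ U₁`. -/
theorem steps_one_two_three
    {φ A : Type*} [CommRing φ] [Invertible (2 : φ)] [Ring A] [Algebra φ A]
    (𝒜 : ZMod 2 → Submodule φ A) [GradedAlgebra 𝒜]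
    (hprime : SuperPrime 𝒜) (hnontriv : 𝒜 1 ≠ ⊥)
    (I : SuperIdeal 𝒜) (hIne : I.carrier ≠ ⊥) (hIproper : I.carrier ≠ ⊤)
    (U : AddSubgroup A)
    (hUgr : ∀ (i : ZMod 2), ∀ x ∈ U, ((DirectSum.decompose 𝒜 x) i : A) ∈ U)
    (hUI : ∀ (i j : ZMod 2), ∀ u ∈ U, u ∈ 𝒜 i → ∀ y ∈ I.carrier, y ∈ 𝒜 j →
      sbr i j u y ∈ U)
    (hU0 : ∀ u v : A, u ∈ U → u ∈ 𝒜 0 → v ∈ U → v ∈ 𝒜 0 → scirc 0 0 u v ∈ evenCenter 𝒜)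
    (hU1 : ∀ u v : A, u ∈ U → u ∈ 𝒜 1 → v ∈ U → v ∈ 𝒜 1 → scirc 1 1 u v = 0)
    (hyp : superBrAdd 𝒜
        (↑(superBrAdd 𝒜 (↑(superBrAdd 𝒜 (↑U) (↑I.carrier)))
            (↑(superBrAdd 𝒜 (↑U) (↑I.carrier)))) : Set A)
        (↑I.carrier) = ⊥) :
    (∀ x ∈ superBrAdd 𝒜 (↑U) (↑I.carrier), x ∈ 𝒜 0 → x ∈ evenCenter 𝒜) ∧
    (∀ u ∈ U, u ∈ 𝒜 0 → ∀ y ∈ I.carrier, y ∈ 𝒜 0 → u * y = y * u) ∧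
    (∀ u v : A, u ∈ U → u ∈ 𝒜 1 → v ∈ U → v ∈ 𝒜 1 → u * v ∈ evenCenter 𝒜) :=
  steps_one_two_three_general 𝒜 hprime I hIne U hUI hU0 hU1 hyp
end

section
/- Let A be a prime superalgebra over a commutative unital ring φ with 1/2 ∈ φ, and let J be a nonzero ideal of A that is supercommutative, i.e., ab = (−1)^{|a||b|}ba for all homogeneous a, b ∈ J. Then A itself is supercommutative: xy = (−1)^{|x||y|}yx for all homogeneous x, y ∈ A. -/
open DirectSum

variable {φ A : Type*}

namespace SuperCommAux

lemma ssign_sq : ∀ i j : ZMod 2, ssign i j * ssign i j = 1 := by decide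

lemma ssign_id1 : ∀ i j k : ZMod 2, ssign i (k + j) * ssign (i + k) j = ssign k (i + j) := by
  decide

lemma ssign_id2 : ∀ k m n : ZMod 2, ssign k m * ssign k n = ssign k (m + n) := by decide

lemma ssign_id3 : ∀ p q m n : ZMod 2,
    ssign q m * (ssign (p + m) (q + n) * (ssign p n * ssign m n)) = ssign p q := by decide

variable {φ A : Type*} [CommRing φ] [Ring A] [Algebra φ A]
variable {𝒜 : ZMod 2 → Submodule φ A} [GradedAlgebra 𝒜]

lemma smul_flip {ε : ℤ} (hε : ε * ε = 1) {X Y : A} (h : X = ε • Y) : Y = ε • X := by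
  rw [h, smul_smul, hε, one_smul]

/-- `s` is a supercentral element of degree `m` lying in `J`. -/
def SC (J : SuperIdeal 𝒜) (m : ZMod 2) (s : A) : Prop :=
  s ∈ J.carrier ∧ s ∈ 𝒜 m ∧ ∀ (k : ZMod 2) (z : A), z ∈ 𝒜 k → z * s = ssign k m • (s * z)

lemma sc_of_mul (J : SuperIdeal 𝒜)
    (hsc : ∀ (i j : ZMod 2), ∀ a ∈ J.carrier, a ∈ 𝒜 i → ∀ b ∈ J.carrier, b ∈ 𝒜 j →
      a * b = ssign i j • (b * a))
    {i j : ZMod 2} {a b : A} (ha : a ∈ J.carrier) (hai : a ∈ 𝒜 i)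
    (hb : b ∈ J.carrier) (hbj : b ∈ 𝒜 j) :
    SC J (i + j) (b * a) := by
  refine ⟨J.mul_mem_left b a ha, ?_, ?_⟩
  · rw [add_comm i j]; exact SetLike.mul_mem_graded hbj hai
  · intro k z hz
    have h1 : a * (z * b) = ssign i (k + j) • (z * b * a) :=
      hsc i (k + j) a ha hai (z * b) (J.mul_mem_left z b hb) (SetLike.mul_mem_graded hz hbj)
    have h1' : z * b * a = ssign i (k + j) • (a * (z * b)) := smul_flip (ssign_sq _ _) h1
    have h2 : a * z * b = ssign (i + k) j • (b * (a * z)) :=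
      hsc (i + k) j (a * z) (J.mul_mem_right z a ha) (SetLike.mul_mem_graded hai hz) b hb hbj
    calc z * (b * a) = z * b * a := by rw [mul_assoc]
      _ = ssign i (k + j) • (a * (z * b)) := h1'
      _ = ssign i (k + j) • (a * z * b) := by rw [mul_assoc]
      _ = ssign i (k + j) • (ssign (i + k) j • (b * (a * z))) := by rw [h2]
      _ = (ssign i (k + j) * ssign (i + k) j) • (b * a * z) := by
            rw [smul_smul, ← mul_assoc]
      _ = ssign k (i + j) • (b * a * z) := by rw [ssign_id1]

lemma sc_mul {J : SuperIdeal 𝒜} {m n : ZMod 2} {s t : A}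
    (hs : SC J m s) (ht : SC J n t) : SC J (m + n) (s * t) := by
  refine ⟨J.mul_mem_right t s hs.1, SetLike.mul_mem_graded hs.2.1 ht.2.1, ?_⟩
  intro k z hz
  calc z * (s * t) = (z * s) * t := by rw [mul_assoc]
    _ = ssign k m • (s * z * t) := by rw [hs.2.2 k z hz, smul_mul_assoc]
    _ = ssign k m • (s * (z * t)) := by rw [mul_assoc]
    _ = ssign k m • (s * (ssign k n • (t * z))) := by rw [ht.2.2 k z hz]
    _ = (ssign k m * ssign k n) • (s * (t * z)) := by rw [mul_smul_comm, smul_smul]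
    _ = ssign k (m + n) • (s * t * z) := by rw [ssign_id2, mul_assoc]

lemma key_annihilate (J : SuperIdeal 𝒜)
    (hsc : ∀ (i j : ZMod 2), ∀ a ∈ J.carrier, a ∈ 𝒜 i → ∀ b ∈ J.carrier, b ∈ 𝒜 j →
      a * b = ssign i j • (b * a))
    {m n p q : ZMod 2} {s t x y : A}
    (hs : SC J m s) (ht : SC J n t) (hx : x ∈ 𝒜 p) (hy : y ∈ 𝒜 q) :
    (x * y) * (s * t) = ssign p q • ((y * x) * (s * t)) := by
  have h : (x * s) * (y * t) = ssign (p + m) (q + n) • ((y * t) * (x * s)) :=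
    hsc (p + m) (q + n) (x * s) (J.mul_mem_left x s hs.1) (SetLike.mul_mem_graded hx hs.2.1)
      (y * t) (J.mul_mem_left y t ht.1) (SetLike.mul_mem_graded hy ht.2.1)
  have hsy : s * y = ssign q m • (y * s) := smul_flip (ssign_sq _ _) (hs.2.2 q y hy)
  have htx : t * x = ssign p n • (x * t) := smul_flip (ssign_sq _ _) (ht.2.2 p x hx)
  have hts : t * s = ssign m n • (s * t) := smul_flip (ssign_sq _ _) (ht.2.2 m s hs.2.1)
  have hL : (x * s) * (y * t) = ssign q m • ((x * y) * (s * t)) := by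
    calc (x * s) * (y * t) = x * ((s * y) * t) := by simp only [mul_assoc]
      _ = x * ((ssign q m • (y * s)) * t) := by rw [hsy]
      _ = ssign q m • ((x * y) * (s * t)) := by
          simp only [smul_mul_assoc, mul_smul_comm, mul_assoc]
  have hR : (y * t) * (x * s) = (ssign p n * ssign m n) • ((y * x) * (s * t)) := by
    calc (y * t) * (x * s) = y * ((t * x) * s) := by simp only [mul_assoc]
      _ = y * ((ssign p n • (x * t)) * s) := by rw [htx]
      _ = ssign p n • (y * (x * (t * s))) := by
          simp only [smul_mul_assoc, mul_smul_comm, mul_assoc]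
      _ = ssign p n • (y * (x * (ssign m n • (s * t)))) := by rw [hts]
      _ = (ssign p n * ssign m n) • ((y * x) * (s * t)) := by
          simp only [smul_mul_assoc, mul_smul_comm, smul_smul, mul_assoc]
  calc (x * y) * (s * t) = ssign q m • ((x * s) * (y * t)) := smul_flip (ssign_sq _ _) hL
    _ = ssign q m • (ssign (p + m) (q + n) • ((y * t) * (x * s))) := by rw [h]
    _ = ssign q m • (ssign (p + m) (q + n) •
          ((ssign p n * ssign m n) • ((y * x) * (s * t)))) := by rw [hR]
    _ = (ssign q m * (ssign (p + m) (q + n) * (ssign p n * ssign m n))) •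
          ((y * x) * (s * t)) := by rw [smul_smul, smul_smul, mul_assoc]
    _ = ssign p q • ((y * x) * (s * t)) := by rw [ssign_id3]

/-- The set of homogeneous left-right multiples of `u`. -/
def genSet (𝒜 : ZMod 2 → Submodule φ A) (u : A) : Set A :=
  {z : A | ∃ (m n : ZMod 2) (r r' : A), r ∈ 𝒜 m ∧ r' ∈ 𝒜 n ∧ z = r * u * r'}

/-- The graded two-sided ideal generated by a homogeneous element `u`. -/
def genIdeal (u : A) {e : ZMod 2} (hu : u ∈ 𝒜 e) : SuperIdeal 𝒜 where
  carrier := Submodule.span φ (genSet 𝒜 u)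
  mul_mem_left := by
    have hom : ∀ (k : ZMod 2) (a : A), a ∈ 𝒜 k → ∀ x ∈ Submodule.span φ (genSet 𝒜 u),
        a * x ∈ Submodule.span φ (genSet 𝒜 u) := by
      intro k a hak x hx
      induction hx using Submodule.span_induction with
      | mem g hg =>
          obtain ⟨m, n, r, r', hr, hr', rfl⟩ := hg
          exact Submodule.subset_span ⟨k + m, n, a * r, r',
            SetLike.mul_mem_graded hak hr, hr', by simp only [mul_assoc]⟩
      | zero => rw [mul_zero]; exact zero_mem _
      | add x1 x2 _ _ ih1 ih2 => rw [mul_add]; exact add_mem ih1 ih2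
      | smul c x1 _ ih => rw [mul_smul_comm]; exact Submodule.smul_mem _ c ih
    intro a x hx
    classical
    rw [← DirectSum.sum_support_decompose 𝒜 a, Finset.sum_mul]
    exact Submodule.sum_mem _ fun k _ => hom k _ (SetLike.coe_mem _) x hx
  mul_mem_right := by
    have hom : ∀ (k : ZMod 2) (a : A), a ∈ 𝒜 k → ∀ x ∈ Submodule.span φ (genSet 𝒜 u),
        x * a ∈ Submodule.span φ (genSet 𝒜 u) := by
      intro k a hak x hx
      induction hx using Submodule.span_induction with
      | mem g hg =>
          obtain ⟨m, n, r, r', hr, hr', rfl⟩ := hg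
          exact Submodule.subset_span ⟨m, n + k, r, r' * a,
            hr, SetLike.mul_mem_graded hr' hak, by simp only [mul_assoc]⟩
      | zero => rw [zero_mul]; exact zero_mem _
      | add x1 x2 _ _ ih1 ih2 => rw [add_mul]; exact add_mem ih1 ih2
      | smul c x1 _ ih => rw [smul_mul_assoc]; exact Submodule.smul_mem _ c ih
    intro a x hx
    classical
    rw [← DirectSum.sum_support_decompose 𝒜 a, Finset.mul_sum]
    exact Submodule.sum_mem _ fun k _ => hom k _ (SetLike.coe_mem _) x hx
  graded' := by
    intro i x hx
    induction hx using Submodule.span_induction with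
    | mem g hg =>
        obtain ⟨m, n, r, r', hr, hr', rfl⟩ := hg
        have hmem : r * u * r' ∈ 𝒜 (m + e + n) :=
          SetLike.mul_mem_graded (SetLike.mul_mem_graded hr hu) hr'
        by_cases hieq : i = m + e + n
        · subst hieq
          rw [DirectSum.decompose_of_mem_same 𝒜 hmem]
          exact Submodule.subset_span ⟨m, n, r, r', hr, hr', rfl⟩
        · rw [DirectSum.decompose_of_mem_ne 𝒜 hmem (Ne.symm hieq)]
          exact zero_mem _
    | zero =>
        rw [DirectSum.decompose_zero]
        simp only [DirectSum.zero_apply, ZeroMemClass.coe_zero]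
        exact zero_mem _
    | add x1 x2 _ _ ih1 ih2 =>
        rw [DirectSum.decompose_add]
        simp only [DirectSum.add_apply, Submodule.coe_add]
        exact add_mem ih1 ih2
    | smul c x1 _ ih =>
        rw [DirectSum.decompose_smul]
        simp only [DFinsupp.smul_apply, Submodule.coe_smul]
        exact Submodule.smul_mem _ c ih

lemma mem_genIdeal (u : A) {e : ZMod 2} (hu : u ∈ 𝒜 e) : u ∈ (genIdeal u hu).carrier :=
  Submodule.subset_span ⟨0, 0, 1, 1, SetLike.one_mem_graded _, SetLike.one_mem_graded _,
    by rw [one_mul, mul_one]⟩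

lemma prime_app (hprime : SuperPrime 𝒜) {e m : ZMod 2} {u w : A}
    (hu : u ∈ 𝒜 e) (hw : w ∈ 𝒜 m)
    (hcen : ∀ (k : ZMod 2) (z : A), z ∈ 𝒜 k → z * w = ssign k m • (w * z))
    (huw : u * w = 0) : u = 0 ∨ w = 0 := by
  have hgen : ∀ g1 ∈ genSet 𝒜 u, ∀ g2 ∈ genSet 𝒜 w, g1 * g2 = 0 := by
    rintro _ ⟨m1, n1, r, r', hr, hr', rfl⟩ _ ⟨m2, n2, s, s', hs, hs', rfl⟩
    have hc : (r' * s) * w = ssign (n1 + m2) m • (w * (r' * s)) :=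
      hcen _ _ (SetLike.mul_mem_graded hr' hs)
    calc (r * u * r') * (s * w * s')
        = r * (u * (((r' * s) * w) * s')) := by simp only [mul_assoc]
      _ = r * (u * ((ssign (n1 + m2) m • (w * (r' * s))) * s')) := by rw [hc]
      _ = ssign (n1 + m2) m • (r * ((u * w) * ((r' * s) * s'))) := by
          simp only [smul_mul_assoc, mul_smul_comm, mul_assoc]
      _ = 0 := by rw [huw, zero_mul, mul_zero, smul_zero]
  have hzero : ∀ x ∈ (genIdeal u hu).carrier, ∀ y ∈ (genIdeal w hw).carrier, x * y = 0 := by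
    intro x hx
    induction hx using Submodule.span_induction with
    | mem g hg =>
        intro y hy
        induction hy using Submodule.span_induction with
        | mem g2 hg2 => exact hgen g hg g2 hg2
        | zero => rw [mul_zero]
        | add y1 y2 _ _ ih1 ih2 => rw [mul_add, ih1, ih2, add_zero]
        | smul c y1 _ ih => rw [mul_smul_comm, ih, smul_zero]
    | zero => intro y _; rw [zero_mul]
    | add x1 x2 _ _ ih1 ih2 => intro y hy; rw [add_mul, ih1 y hy, ih2 y hy, add_zero]
    | smul c x1 _ ih => intro y hy; rw [smul_mul_assoc, ih y hy, smul_zero]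
  rcases hprime _ _ hzero with h | h
  · left
    have := mem_genIdeal u hu
    rw [h] at this
    simpa using this
  · right
    have := mem_genIdeal w hw
    rw [h] at this
    simpa using this

end SuperCommAux


/-- Let `A` be a prime superalgebra over a commutative ring `φ` with `½ ∈ φ`, and let `J` be
a nonzero supercommutative ideal of `A`. Then `A` itself is supercommutative. -/
theorem supercommutative_of_supercommutative_ideal
    {φ A : Type*} [CommRing φ] [Invertible (2 : φ)] [Ring A] [Algebra φ A]
    (𝒜 : ZMod 2 → Submodule φ A) [GradedAlgebra 𝒜]
    (hprime : SuperPrime 𝒜)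
    (J : SuperIdeal 𝒜) (hJne : J.carrier ≠ ⊥)
    (hsc : ∀ (i j : ZMod 2), ∀ a ∈ J.carrier, a ∈ 𝒜 i → ∀ b ∈ J.carrier, b ∈ 𝒜 j →
      a * b = ssign i j • (b * a)) :
    ∀ (i j : ZMod 2), ∀ x ∈ 𝒜 i, ∀ y ∈ 𝒜 j, x * y = ssign i j • (y * x) := by
  intro p q x hx y hy
  open SuperCommAux in
  by_cases hcase : ∃ (i1 i2 i3 i4 : ZMod 2) (a b c d : A),
      a ∈ J.carrier ∧ a ∈ 𝒜 i1 ∧ b ∈ J.carrier ∧ b ∈ 𝒜 i2 ∧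
      c ∈ J.carrier ∧ c ∈ 𝒜 i3 ∧ d ∈ J.carrier ∧ d ∈ 𝒜 i4 ∧ (b * a) * (d * c) ≠ 0
  · obtain ⟨i1, i2, i3, i4, a, b, c, d, ha, ha1, hb, hb2, hc, hc3, hd, hd4, hne⟩ := hcase
    have hs := sc_of_mul J hsc ha ha1 hb hb2
    have ht := sc_of_mul J hsc hc hc3 hd hd4
    have hst := sc_mul hs ht
    have hann := key_annihilate J hsc hs ht hx hy
    have humem : x * y - ssign p q • (y * x) ∈ 𝒜 (p + q) := by
      have h1 : x * y ∈ 𝒜 (p + q) := SetLike.mul_mem_graded hx hy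
      have h2 : y * x ∈ 𝒜 (p + q) := by
        rw [add_comm]; exact SetLike.mul_mem_graded hy hx
      exact sub_mem h1 (zsmul_mem h2 _)
    have huw : (x * y - ssign p q • (y * x)) * ((b * a) * (d * c)) = 0 := by
      rw [sub_mul, smul_mul_assoc, hann, sub_self]
    rcases prime_app hprime humem hst.2.1 hst.2.2 huw with h | h
    · exact sub_eq_zero.mp h
    · exact absurd h hne
  · have hall : ∀ (i1 i2 i3 i4 : ZMod 2) (a b c d : A),
        a ∈ J.carrier → a ∈ 𝒜 i1 → b ∈ J.carrier → b ∈ 𝒜 i2 →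
        c ∈ J.carrier → c ∈ 𝒜 i3 → d ∈ J.carrier → d ∈ 𝒜 i4 →
        (b * a) * (d * c) = 0 := by
      intro i1 i2 i3 i4 a b c d h1 h2 h3 h4 h5 h6 h7 h8
      by_contra hne
      exact hcase ⟨i1, i2, i3, i4, a, b, c, d, h1, h2, h3, h4, h5, h6, h7, h8, hne⟩
    have hz : ∀ (i j : ZMod 2) (a b : A), a ∈ J.carrier → a ∈ 𝒜 i →
        b ∈ J.carrier → b ∈ 𝒜 j → b * a = 0 := by
      intro i j a b ha hai hb hbj
      have hs := sc_of_mul J hsc ha hai hb hbj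
      have h0 : (b * a) * (b * a) = 0 := hall i j i j a b a b ha hai hb hbj ha hai hb hbj
      rcases prime_app hprime hs.2.1 hs.2.1 hs.2.2 h0 with h | h <;> exact h
    exfalso
    apply hJne
    have hJJ : ∀ x' ∈ J.carrier, ∀ y' ∈ J.carrier, x' * y' = 0 := by
      intro x' hx' y' hy'
      classical
      rw [← DirectSum.sum_support_decompose 𝒜 x', ← DirectSum.sum_support_decompose 𝒜 y',
        Finset.sum_mul_sum]
      refine Finset.sum_eq_zero fun k _ => Finset.sum_eq_zero fun l _ => ?_
      exact hz l k _ _ (J.graded' l y' hy') (SetLike.coe_mem _)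
        (J.graded' k x' hx') (SetLike.coe_mem _)
    rcases hprime J J hJJ with h | h <;> exact h
end

section
/- Let A be a prime superalgebra with superinvolution * over a commutative unital ring φ with 1/2 ∈ φ, and let J be a nonzero ideal of A consisting of symmetric elements, i.e., J ⊆ H. Then A is supercommutative: xy = (−1)^{|x||y|}yx for all homogeneous x, y ∈ A. -/
open DirectSum

variable {φ A : Type*}

/-- Let `A` be a prime superalgebra with superinvolution over a commutative ring `φ` with
`½ ∈ φ`, and let `J` be a nonzero ideal of `A` consisting of symmetric elements (`J ⊆ H`).
Then `A` is supercommutative. -/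
theorem supercommutative_of_symmetric_ideal
    {φ A : Type*} [CommRing φ] [Invertible (2 : φ)] [Ring A] [Algebra φ A]
    (𝒜 : ZMod 2 → Submodule φ A) [GradedAlgebra 𝒜]
    (hprime : SuperPrime 𝒜) (σ : Superinvolution 𝒜)
    (J : SuperIdeal 𝒜) (hJne : J.carrier ≠ ⊥)
    (hJH : ∀ x ∈ J.carrier, σ.toFun x = x) :
    ∀ (i j : ZMod 2), ∀ x ∈ 𝒜 i, ∀ y ∈ 𝒜 j, x * y = ssign i j • (y * x) := by
  classical
  have hsq : ∀ k j : ZMod 2, ssign k j * ssign k j = 1 := by decide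
  have hmul : ∀ i j k : ZMod 2, ssign k j * ssign (i + k) j = ssign i j := by decide
  have hmul2 : ∀ i j k : ZMod 2, ssign i (j + k) * ssign i k = ssign i j := by decide
  -- The left annihilator of J is a graded ideal, hence 0 by primeness.
  have hann : ∀ c : A, (∀ k : ZMod 2, ∀ u ∈ J.carrier, u ∈ 𝒜 k → c * u = 0) → c = 0 := by
    intro c hc
    set Icar : Submodule φ A :=
      { carrier := {a | ∀ u ∈ J.carrier, a * u = 0}
        add_mem' := fun ha hb u hu => by simp [add_mul, ha u hu, hb u hu]
        zero_mem' := fun u hu => by simp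
        smul_mem' := fun r a ha u hu => by simp [smul_mul_assoc, ha u hu] } with hIcar
    have hc' : c ∈ Icar := by
      intro u hu
      rw [← DirectSum.sum_support_decompose 𝒜 u, Finset.mul_sum]
      refine Finset.sum_eq_zero fun k _ => ?_
      exact hc k _ (J.graded' k u hu) (SetLike.coe_mem _)
    have hgr : ∀ (i : ZMod 2), ∀ x ∈ Icar, ((DirectSum.decompose 𝒜 x) i : A) ∈ Icar := by
      intro i x hx u hu
      rw [← DirectSum.sum_support_decompose 𝒜 u, Finset.mul_sum]
      refine Finset.sum_eq_zero fun k _ => ?_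
      have h1 : (decompose 𝒜 (x * ((decompose 𝒜 u) k : A)) (i + k) : A)
          = (decompose 𝒜 x i : A) * ((decompose 𝒜 u) k : A) :=
        DirectSum.coe_decompose_mul_add_of_right_mem 𝒜 (SetLike.coe_mem _)
      rw [← h1, hx _ (J.graded' k u hu)]
      simp
    set I : SuperIdeal 𝒜 :=
      { carrier := Icar
        mul_mem_left := fun a x hx u hu => by
          rw [mul_assoc, hx u hu, mul_zero]
        mul_mem_right := fun a x hx u hu => by
          rw [mul_assoc]; exact hx _ (J.mul_mem_left a u hu)
        graded' := hgr }
    rcases hprime I J (fun x hx y hy => hx y hy) with h | h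
    · have : c ∈ I.carrier := hc'
      rw [h, Submodule.mem_bot] at this; exact this
    · exact absurd h hJne
  -- Step 1: J is supercommutative (via the superinvolution).
  have step1 : ∀ (i j : ZMod 2), ∀ x ∈ J.carrier, x ∈ 𝒜 i → ∀ y ∈ J.carrier, y ∈ 𝒜 j →
      x * y = ssign i j • (y * x) := by
    intro i j x hxJ hxi y hyJ hyj
    have h1 := σ.mul_rev i j x hxi y hyj
    rw [hJH x hxJ, hJH y hyJ, hJH (x * y) (J.mul_mem_right y x hxJ)] at h1
    exact h1
  -- Step 2: homogeneous elements of A supercommute with homogeneous elements of J.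
  have step2 : ∀ (i j : ZMod 2), ∀ a ∈ 𝒜 i, ∀ y ∈ J.carrier, y ∈ 𝒜 j →
      a * y = ssign i j • (y * a) := by
    intro i j a hai y hyJ hyj
    rw [← sub_eq_zero]
    apply hann
    intro k u huJ huk
    have hau : a * u ∈ J.carrier := J.mul_mem_left a u huJ
    have hauk : a * u ∈ 𝒜 (i + k) := SetLike.mul_mem_graded hai huk
    have h1 : (a * u) * y = ssign (i + k) j • (y * (a * u)) :=
      step1 (i + k) j (a * u) hau hauk y hyJ hyj
    have h2 : u * y = ssign k j • (y * u) := step1 k j u huJ huk y hyJ hyj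
    have e1 : a * (u * y) = ssign (i + k) j • ((y * a) * u) := by
      rw [← mul_assoc, h1, ← mul_assoc]
    have e2 : a * (u * y) = ssign k j • ((a * y) * u) := by
      rw [h2, mul_smul_comm, ← mul_assoc, mul_assoc]
    have e4 : ssign k j • (ssign k j • ((a * y) * u))
        = ssign k j • (ssign (i + k) j • ((y * a) * u)) :=
      congrArg (fun t => ssign k j • t) (e2.symm.trans e1)
    rw [smul_smul, smul_smul, hsq, hmul, one_smul] at e4
    rw [sub_mul, smul_mul_assoc, e4, mul_assoc, sub_self]
  -- Step 3: general supercommutativity.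
  intro i j x hxi y hyj
  rw [← sub_eq_zero]
  apply hann
  intro k u huJ huk
  have hyu : y * u ∈ J.carrier := J.mul_mem_left y u huJ
  have hyuk : y * u ∈ 𝒜 (j + k) := SetLike.mul_mem_graded hyj huk
  have h1 : x * (y * u) = ssign i (j + k) • ((y * u) * x) :=
    step2 i (j + k) x hxi (y * u) hyu hyuk
  have h2 : x * u = ssign i k • (u * x) := step2 i k x hxi u huJ huk
  have h2' : u * x = ssign i k • (x * u) := by
    rw [h2, smul_smul, hsq, one_smul]
  have e1 : (x * y) * u = ssign i j • ((y * x) * u) := by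
    rw [mul_assoc, h1, mul_assoc, h2', mul_smul_comm, smul_smul, hmul2, ← mul_assoc]
  rw [sub_mul, smul_mul_assoc, e1, sub_self]
end

section
/- Let A be a prime nontrivial superalgebra over a commutative unital ring φ with 1/2 ∈ φ. If u ∈ A₁ satisfies [u, x] = 0 (superbracket) for every homogeneous x ∈ A, then u = 0. In other words, the odd part of the supercenter of A is zero. -/
open DirectSum

variable {φ A : Type*}

/-- Let `A` be a prime nontrivial superalgebra over a commutative ring `φ` with `½ ∈ φ`.
If `u ∈ A₁` supercommutes with every homogeneous element of `A`, then `u = 0`; that is, the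
odd part of the supercenter of `A` is zero. -/
theorem odd_supercenter_zero
    {φ A : Type*} [CommRing φ] [Invertible (2 : φ)] [Ring A] [Algebra φ A]
    (𝒜 : ZMod 2 → Submodule φ A) [GradedAlgebra 𝒜]
    (hprime : SuperPrime 𝒜) (hnontriv : 𝒜 1 ≠ ⊥)
    (u : A) (hu : u ∈ 𝒜 1)
    (hc : ∀ (j : ZMod 2), ∀ x ∈ 𝒜 j, sbr 1 j u x = 0) :
    u = 0 := by
  classical
  -- u² = 0
  have husq : u * u = 0 := by
    have h : u * u + u * u = 0 := by
      have h2 := hc 1 u hu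
      simp only [sbr, ssign, and_self, if_true, neg_smul, one_smul, sub_neg_eq_add] at h2
      exact h2
    calc u * u = ⅟(2:φ) • ((2:φ) • (u * u)) := by
          rw [smul_smul, invOf_mul_self, one_smul]
      _ = ⅟(2:φ) • (u * u + u * u) := by rw [two_smul]
      _ = 0 := by rw [h, smul_zero]
  -- u supercommutes, hence u * w * u = 0 for all w
  have key : ∀ w : A, u * w * u = 0 := by
    intro w
    conv_lhs => rw [← DirectSum.sum_support_decompose 𝒜 w]
    rw [Finset.mul_sum, Finset.sum_mul]
    apply Finset.sum_eq_zero
    intro i _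
    have hmem : ((DirectSum.decompose 𝒜 w i : 𝒜 i) : A) ∈ 𝒜 i := (DirectSum.decompose 𝒜 w i).2
    have h := hc i _ hmem
    unfold sbr at h
    have h' : u * ((DirectSum.decompose 𝒜 w i : 𝒜 i) : A)
        = ssign 1 i • (((DirectSum.decompose 𝒜 w i : 𝒜 i) : A) * u) := sub_eq_zero.mp h
    rw [h', smul_mul_assoc, mul_assoc, husq, mul_zero, smul_zero]
  -- the projection onto the i-th component as a linear map
  let D : ZMod 2 → A →ₗ[φ] A := fun i =>
    (𝒜 i).subtype ∘ₗ (DFinsupp.lapply i) ∘ₗ (DirectSum.decomposeLinearEquiv 𝒜).toLinearMap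
  have hD : ∀ (i : ZMod 2) (x : A), D i x = ((DirectSum.decompose 𝒜 x) i : A) := fun i x => rfl
  -- the graded ideal generated by u
  set S : Set A := {z : A | ∃ a b : A, z = a * u * b} with hS
  have huS : u ∈ S := ⟨1, 1, by rw [one_mul, mul_one]⟩
  have hDgen : ∀ (i : ZMod 2), ∀ z ∈ S, D i z ∈ Submodule.span φ S := by
    intro i z hz
    obtain ⟨a, b, rfl⟩ := hz
    have expand : a * u * b =
        ∑ j ∈ (DirectSum.decompose 𝒜 a).support, ∑ k ∈ (DirectSum.decompose 𝒜 b).support,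
          ((DirectSum.decompose 𝒜 a j : 𝒜 j) : A) * u * ((DirectSum.decompose 𝒜 b k : 𝒜 k) : A) := by
      conv_lhs => rw [← DirectSum.sum_support_decompose 𝒜 a,
        ← DirectSum.sum_support_decompose 𝒜 b]
      rw [Finset.sum_mul, Finset.sum_mul]
      refine Finset.sum_congr rfl fun j _ => ?_
      rw [Finset.mul_sum]
    rw [expand, map_sum]
    refine Submodule.sum_mem _ fun j _ => ?_
    rw [map_sum]
    refine Submodule.sum_mem _ fun k _ => ?_
    have htmem : ((DirectSum.decompose 𝒜 a j : 𝒜 j) : A) * u * ((DirectSum.decompose 𝒜 b k : 𝒜 k) : A)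
        ∈ 𝒜 (j + 1 + k) :=
      SetLike.mul_mem_graded (SetLike.mul_mem_graded (DirectSum.decompose 𝒜 a j).2 hu)
        (DirectSum.decompose 𝒜 b k).2
    rw [hD]
    by_cases hik : i = j + 1 + k
    · subst hik
      rw [DirectSum.decompose_of_mem_same 𝒜 htmem]
      exact Submodule.subset_span ⟨_, _, rfl⟩
    · rw [DirectSum.decompose_of_mem_ne 𝒜 htmem (Ne.symm hik)]
      exact Submodule.zero_mem _
  let I : SuperIdeal 𝒜 :=
    { carrier := Submodule.span φ S
      mul_mem_left := by
        intro a x hx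
        induction hx using Submodule.span_induction with
        | mem z hz =>
          obtain ⟨c, d, rfl⟩ := hz
          exact Submodule.subset_span ⟨a * c, d, by noncomm_ring⟩
        | zero => rw [mul_zero]; exact Submodule.zero_mem _
        | add x y _ _ hx hy => rw [mul_add]; exact Submodule.add_mem _ hx hy
        | smul r x _ hx => rw [mul_smul_comm]; exact Submodule.smul_mem _ r hx
      mul_mem_right := by
        intro a x hx
        induction hx using Submodule.span_induction with
        | mem z hz =>
          obtain ⟨c, d, rfl⟩ := hz
          exact Submodule.subset_span ⟨c, d * a, by noncomm_ring⟩
        | zero => rw [zero_mul]; exact Submodule.zero_mem _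
        | add x y _ _ hx hy => rw [add_mul]; exact Submodule.add_mem _ hx hy
        | smul r x _ hx => rw [smul_mul_assoc]; exact Submodule.smul_mem _ r hx
      graded' := by
        intro i x hx
        rw [← hD]
        induction hx using Submodule.span_induction with
        | mem z hz => exact hDgen i z hz
        | zero => rw [map_zero]; exact Submodule.zero_mem _
        | add x y _ _ hx hy => rw [map_add]; exact Submodule.add_mem _ hx hy
        | smul r x _ hx => rw [map_smul]; exact Submodule.smul_mem _ r hx }
  -- I · I = 0
  have hII : ∀ x ∈ I.carrier, ∀ y ∈ I.carrier, x * y = 0 := by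
    have hgen : ∀ x ∈ S, ∀ y ∈ S, x * y = 0 := by
      rintro _ ⟨a, b, rfl⟩ _ ⟨c, d, rfl⟩
      have : a * u * b * (c * u * d) = a * (u * (b * c) * u) * d := by noncomm_ring
      rw [this, key, mul_zero, zero_mul]
    intro x hx y hy
    induction hx using Submodule.span_induction with
    | mem z hz =>
      induction hy using Submodule.span_induction with
      | mem w hw => exact hgen z hz w hw
      | zero => rw [mul_zero]
      | add y₁ y₂ _ _ h₁ h₂ => rw [mul_add, h₁, h₂, add_zero]
      | smul r y _ h => rw [mul_smul_comm, h, smul_zero]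
    | zero => rw [zero_mul]
    | add x₁ x₂ _ _ h₁ h₂ => rw [add_mul, h₁, h₂, add_zero]
    | smul r x _ h => rw [smul_mul_assoc, h, smul_zero]
  have := hprime I I hII
  have hbot : I.carrier = ⊥ := by rcases this with h | h <;> exact h
  have : u ∈ I.carrier := Submodule.subset_span huS
  rw [hbot] at this
  simpa using this
end
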